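/- arXiv:1707.08513 — 3 statements merged into one kernel-verified Lean document; each statement's English description precedes it below -/
import Mathlib

section
/- The graph G on the fiber F_{N,t} (vertices are nonnegative integer vectors of length N summing to t, with an edge between x and y whenever y = x ± m_k for some column m_k of the basis B_N) is connected: any two elements of F_{N,t} are joined by a path of such moves keeping all entries nonnegative along the way. -/
/-!
Every point of the fiber is joined to the corner `t • e₀`: as long as some coordinate `k ≠ 0`
is positive, the move `+m_k` shifts one unit from coordinate `k` to coordinate `0` without
leaving `ℕ^N`, and it lowers the mass `∑ᵢ xᵢ - x₀` outside coordinate `0` by one. Since moves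
can be reversed, any two points of the fiber are connected through the corner.
-/

/-- The `k`-th column of the Markov basis `B_N`: entry `1` in position `0`
(first position), `-1` in position `k`, and `0` elsewhere. -/
def basisMove (N k : ℕ) : Fin N → ℤ := fun i =>
  if (i : ℕ) = 0 then 1 else if (i : ℕ) = k then -1 else 0

def fiberMove (N : ℕ) (a b : Fin N → ℤ) : Prop :=
  (∀ i, 0 ≤ a i) ∧ (∀ i, 0 ≤ b i) ∧
    ∃ k, 1 ≤ k ∧ k < N ∧ (b = a + basisMove N k ∨ b = a - basisMove N k)

instance fiberMove.instSymm (N : ℕ) : Std.Symm (fiberMove N) where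
  symm a b := by
    rintro ⟨ha, hb, k, hk1, hkN, rfl | rfl⟩
    · exact ⟨hb, ha, k, hk1, hkN, Or.inr (add_sub_cancel_right a _).symm⟩
    · exact ⟨hb, ha, k, hk1, hkN, Or.inl (sub_add_cancel a _).symm⟩

theorem basisMove_eq {N : ℕ} [NeZero N] {k : Fin N} (hk : k ≠ 0) :
    basisMove N k = Pi.single 0 1 - Pi.single k 1 := by
  funext i
  rcases eq_or_ne i 0 with rfl | hi0
  · simp only [basisMove, Fin.val_zero, if_true, Pi.sub_apply, Pi.single_eq_same,
      Pi.single_eq_of_ne' hk, sub_zero]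
  · have hi : (i : ℕ) ≠ 0 := Fin.val_ne_iff.2 hi0
    rcases eq_or_ne i k with rfl | hik
    · simp [basisMove, hi, hi0]
    · simp [basisMove, hi, hi0, hik, Fin.val_ne_of_ne hik]

theorem sum_basisMove {N : ℕ} [NeZero N] {k : Fin N} (hk : k ≠ 0) :
    ∑ i, basisMove N k i = 0 := by
  simp [basisMove_eq hk, Finset.sum_sub_distrib]

theorem fiberMove_add_basisMove {N : ℕ} [NeZero N] {x : Fin N → ℤ} (hx : ∀ i, 0 ≤ x i)
    {k : Fin N} (hk : k ≠ 0) (hxk : 0 < x k) :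
    fiberMove N x (x + basisMove N k) := by
  refine ⟨hx, fun i => ?_, k, Nat.one_le_iff_ne_zero.2 (Fin.val_ne_iff.2 hk),
    k.isLt, Or.inl rfl⟩
  rw [basisMove_eq hk, Pi.add_apply, Pi.sub_apply, Pi.single_apply, Pi.single_apply]
  rcases eq_or_ne i k with rfl | hik
  · rw [if_neg hk, if_pos rfl]
    omega
  · have := hx i
    split_ifs <;> omega

theorem eq_single_zero_of_forall_ne_zero {N : ℕ} [NeZero N] {x : Fin N → ℤ}
    (hx : ∀ i ≠ 0, x i = 0) : x = Pi.single 0 (∑ i, x i) := by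
  rw [Finset.sum_eq_single 0 (fun i _ hi => hx i hi) (by simp)]
  funext i
  rcases eq_or_ne i 0 with rfl | hi
  · simp
  · simp [hi, hx i hi]

theorem reflTransGen_fiberMove_single_zero {N : ℕ} [NeZero N] {x : Fin N → ℤ}
    (hx : ∀ i, 0 ≤ x i) :
    Relation.ReflTransGen (fiberMove N) x (Pi.single 0 (∑ i, x i)) := by
  obtain ⟨n, hn⟩ : ∃ n : ℕ, ∑ i, x i - x 0 = n :=
    Int.eq_ofNat_of_zero_le <| by
      rw [← Finset.sum_erase_eq_sub (Finset.mem_univ 0)]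
      exact Finset.sum_nonneg fun i _ => hx i
  induction n generalizing x with
  | zero =>
    rw [← eq_single_zero_of_forall_ne_zero]
    rw [← Finset.sum_erase_eq_sub (Finset.mem_univ 0), Nat.cast_zero,
      Finset.sum_eq_zero_iff_of_nonneg fun i _ => hx i] at hn
    exact fun i hi => hn i (Finset.mem_erase.2 ⟨hi, Finset.mem_univ i⟩)
  | succ n ih =>
    obtain ⟨k, hk, hxk⟩ : ∃ k ≠ 0, 0 < x k := by
      rw [← Finset.sum_erase_eq_sub (Finset.mem_univ 0)] at hn
      obtain ⟨k, hk, hxk⟩ := Finset.exists_ne_zero_of_sum_ne_zero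
        (hn.trans_ne (by omega))
      exact ⟨k, Finset.ne_of_mem_erase hk, (hx k).lt_of_ne' hxk⟩
    have hstep := fiberMove_add_basisMove hx hk hxk
    have hsum : ∑ i, (x + basisMove N k) i = ∑ i, x i := by
      simp [Finset.sum_add_distrib, sum_basisMove hk]
    rw [← hsum]
    refine .head hstep (ih hstep.2.1 ?_)
    rw [hsum, Pi.add_apply, basisMove_eq hk]
    rw [Pi.sub_apply, Pi.single_eq_same, Pi.single_eq_of_ne' hk]
    omega

theorem stmt5 (N t : ℕ) (hN : 2 ≤ N) (x y : Fin N → ℤ)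
    (hx0 : ∀ i, 0 ≤ x i) (hy0 : ∀ i, 0 ≤ y i)
    (hxt : ∑ i, x i = t) (hyt : ∑ i, y i = t) :
    Relation.ReflTransGen
      (fun a b : Fin N → ℤ => (∀ i, 0 ≤ a i) ∧ (∀ i, 0 ≤ b i) ∧
        ∃ k, 1 ≤ k ∧ k < N ∧ (b = a + basisMove N k ∨ b = a - basisMove N k))
      x y := by
  have : NeZero N := ⟨by omega⟩
  have hx := reflTransGen_fiberMove_single_zero hx0
  have hy := reflTransGen_fiberMove_single_zero hy0
  rw [hxt] at hx
  rw [hyt] at hy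
  exact hx.trans (Std.Symm.symm _ _ hy)
end

section
/- (MAD reduction by orbit conditioning) With the same setup, the mean absolute deviation satisfies E_p[|1{U(y)≤u} − F|] ≥ E_{p_π}[|F_U(u|π) − F|], where F = F_U(u|F_{N,t}) is the common mean. Moreover E_p[|1{U(y)≤u} − F|] = ∑_π p_π(π)(F − 2 F_U(u|π) F + F_U(u|π)). -/
/-! On a value `b ∈ {0, 1}` the absolute deviation from `v ∈ [0, 1]` is the affine expression
`v - 2 b v + b`, so the mean absolute deviation of the indicator `1{U y ≤ u}` is affine in the
indicator. Since `p` is constant on each orbit, averaging over an orbit replaces the indicator by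
its orbit mean `F_U(u|π)`, which gives the identity. For a general `r ∈ [0, 1]` the affine
expression only dominates `|r - v|`, which gives the inequality. -/

open Finset

lemma abs_sub_le_sub_two_mul_add {r v : ℝ} (hr : r ∈ Set.Icc 0 1) (hv : v ∈ Set.Icc 0 1) :
    |r - v| ≤ v - 2 * r * v + r := by
  obtain ⟨hr0, hr1⟩ := hr
  obtain ⟨hv0, hv1⟩ := hv
  rw [abs_le]
  constructor <;> nlinarith

lemma abs_ite_sub_eq (a : Prop) [Decidable a] {v : ℝ} (hv : v ∈ Set.Icc 0 1) :
    |(if a then (1 : ℝ) else 0) - v|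
      = v - 2 * (if a then (1 : ℝ) else 0) * v + (if a then 1 else 0) := by
  obtain ⟨hv0, hv1⟩ := hv
  split_ifs
  · rw [abs_of_nonneg (by linarith)]; ring
  · rw [abs_of_nonpos (by linarith)]; ring

lemma card_filter_div_card_mem_Icc {α : Type*} (s : Finset α) (q : α → Prop)
    [DecidablePred q] :
    ((s.filter q).card : ℝ) / s.card ∈ Set.Icc 0 1 :=
  ⟨by positivity, div_le_one_of_le₀ (mod_cast card_filter_le s q) (Nat.cast_nonneg _)⟩

lemma sum_mul_eq_sum_mul_sum_div_card_of_const {α : Type*} (s : Finset α) {p : α → ℝ}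
    (hp : ∀ x ∈ s, ∀ z ∈ s, p x = p z) (f : α → ℝ) :
    ∑ y ∈ s, p y * f y = (∑ y ∈ s, p y) * ((∑ y ∈ s, f y) / s.card) := by
  rcases s.eq_empty_or_nonempty with rfl | ⟨y₀, hy₀⟩
  · simp
  have hc : ∀ y ∈ s, p y = p y₀ := fun y hy => hp y hy y₀ hy₀
  have hcard : (s.card : ℝ) ≠ 0 := Nat.cast_ne_zero.mpr (card_ne_zero_of_mem hy₀)
  rw [sum_congr rfl hc, sum_congr rfl fun y hy => by rw [hc y hy], ← mul_sum, sum_const,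
    nsmul_eq_mul]
  field_simp

lemma sum_mul_abs_ite_sub_of_const {α : Type*} (s : Finset α) {p : α → ℝ}
    (hp : ∀ x ∈ s, ∀ z ∈ s, p x = p z) (q : α → Prop) [DecidablePred q] {v : ℝ}
    (hv : v ∈ Set.Icc 0 1) :
    ∑ y ∈ s, p y * |(if q y then (1 : ℝ) else 0) - v|
      = (∑ y ∈ s, p y) *
          (v - 2 * (((s.filter q).card : ℝ) / s.card) * v
            + ((s.filter q).card : ℝ) / s.card) := by
  have hmean := sum_mul_eq_sum_mul_sum_div_card_of_const s hp fun y => if q y then (1 : ℝ) else 0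
  rw [sum_boole] at hmean
  calc ∑ y ∈ s, p y * |(if q y then (1 : ℝ) else 0) - v|
      = v * ∑ y ∈ s, p y + (1 - 2 * v) * ∑ y ∈ s, p y * (if q y then (1 : ℝ) else 0) := by
        simp only [abs_ite_sub_eq _ hv, mul_sum, ← sum_add_distrib]
        exact sum_congr rfl fun y _ => by ring
    _ = _ := by rw [hmean]; ring

theorem stmt13 (N t : ℕ) (F : Finset (Fin N → ℕ))
    (hF : ∀ y : Fin N → ℕ, y ∈ F ↔ ∑ i, y i = t)
    (P : Finset (Finset (Fin N → ℕ)))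
    (hsub : ∀ π ∈ P, π ⊆ F) (hne : ∀ π ∈ P, π.Nonempty)
    (hcover : ∀ y ∈ F, ∃ π ∈ P, y ∈ π)
    (hdisj : (P : Set (Finset (Fin N → ℕ))).PairwiseDisjoint id)
    (p : (Fin N → ℕ) → ℝ) (hp0 : ∀ y, 0 ≤ p y) (hp1 : ∑ y ∈ F, p y = 1)
    (hconst : ∀ π ∈ P, ∀ x ∈ π, ∀ z ∈ π, p x = p z)
    (U : (Fin N → ℕ) → ℝ) (u : ℝ) [DecidablePred fun y : Fin N → ℕ => U y ≤ u]
    (Fv : ℝ) (hFv : Fv = ∑ y ∈ F, p y * (if U y ≤ u then (1 : ℝ) else 0)) :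
    (∑ y ∈ F, p y * |(if U y ≤ u then (1 : ℝ) else 0) - Fv|
      ≥ ∑ π ∈ P, (∑ y ∈ π, p y) *
          |((π.filter fun y => U y ≤ u).card : ℝ) / (π.card : ℝ) - Fv|) ∧
    (∑ y ∈ F, p y * |(if U y ≤ u then (1 : ℝ) else 0) - Fv|
      = ∑ π ∈ P, (∑ y ∈ π, p y) *
          (Fv - 2 * (((π.filter fun y => U y ≤ u).card : ℝ) / (π.card : ℝ)) * Fv
            + ((π.filter fun y => U y ≤ u).card : ℝ) / (π.card : ℝ))) := by
  have hFv01 : Fv ∈ Set.Icc 0 1 := by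
    have hind : ∀ y, 0 ≤ p y * (if U y ≤ u then (1 : ℝ) else 0) ∧
        p y * (if U y ≤ u then (1 : ℝ) else 0) ≤ p y := fun y => by
      split_ifs <;> simp [hp0 y]
    subst hFv
    exact ⟨sum_nonneg fun y _ => (hind y).1, (sum_le_sum fun y _ => (hind y).2).trans_eq hp1⟩
  have hpartition : F = P.biUnion id :=
    ext fun y => ⟨fun hy => mem_biUnion.mpr (hcover y hy),
      fun hy => let ⟨π, hπ, hyπ⟩ := mem_biUnion.mp hy; hsub π hπ hyπ⟩
  have heq : ∑ y ∈ F, p y * |(if U y ≤ u then (1 : ℝ) else 0) - Fv|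
      = ∑ π ∈ P, (∑ y ∈ π, p y) *
          (Fv - 2 * (((π.filter fun y => U y ≤ u).card : ℝ) / (π.card : ℝ)) * Fv
            + ((π.filter fun y => U y ≤ u).card : ℝ) / (π.card : ℝ)) := by
    rw [hpartition, sum_biUnion hdisj]
    exact sum_congr rfl fun π hπ => sum_mul_abs_ite_sub_of_const π (hconst π hπ) _ hFv01
  refine ⟨heq ▸ sum_le_sum fun π _ => ?_, heq⟩
  exact mul_le_mul_of_nonneg_left
    (abs_sub_le_sub_two_mul_add (card_filter_div_card_mem_Icc π _) hFv01)
    (sum_nonneg fun y _ => hp0 y)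
end

section
/- The set of moves B_t^{(π)} = { m_{k,i} : 2 ≤ k ≤ t, 1 ≤ i ≤ ⌊k/2⌋ } is a Markov basis for the fiber F^{(π)}_{N,t} = { f ∈ ℕ^{t+1} : ∑_j j·f_j = t and ∑_j f_j = N }: any two elements of F^{(π)}_{N,t} are connected by a finite sequence of signed moves ±m_{k,i} such that all intermediate vectors remain in ℕ^{t+1} (hence in F^{(π)}_{N,t}). -/
/-!
A fiber element `f` is the frequency vector of a partition of `t` into `N` parts (zero parts
allowed): `f j` counts the parts of size `j`. For `a ≤ b`, subtracting the move `m_{a+b,a}` merges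
a part `a` and a part `b` into one part `a + b` and a zero part. Merging while there are two nonzero
parts ends at the unique fiber element with at most one nonzero part (the partition `t, 0, …, 0`),
and since moves can be run backwards any two fiber elements meet there.
-/

/-- The move `m_{k,i}` on `ℤ^(t+1)`: start from the zero vector, set coordinates
`0` and `k` to `-1`, then add `1` at coordinate `i` and add `1` at coordinate `k - i`. -/
def freqMove (t k i : ℕ) : Fin (t + 1) → ℤ := fun j =>
  (if (j : ℕ) = 0 then -1 else 0) + (if (j : ℕ) = k then -1 else 0) +
    (if (j : ℕ) = i then 1 else 0) + (if (j : ℕ) = k - i then 1 else 0)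

open Finset Relation

def freqFiber (t N : ℕ) : Set (Fin (t + 1) → ℤ) :=
  {f | 0 ≤ f ∧ ∑ j, f j = N ∧ ∑ j : Fin (t + 1), ((j : ℕ) : ℤ) * f j = t}

def FreqMoveStep (t : ℕ) (a b : Fin (t + 1) → ℤ) : Prop :=
  0 ≤ a ∧ 0 ≤ b ∧ ∃ k i, 2 ≤ k ∧ k ≤ t ∧ 1 ≤ i ∧ i ≤ k / 2 ∧
    (b = a + freqMove t k i ∨ b = a - freqMove t k i)

instance (t : ℕ) : Std.Symm (FreqMoveStep t) where
  symm := by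
    rintro a b ⟨ha, hb, k, i, h2k, hkt, hi, hik, rfl | rfl⟩
    · exact ⟨hb, ha, k, i, h2k, hkt, hi, hik, Or.inr (add_sub_cancel_right a _).symm⟩
    · exact ⟨hb, ha, k, i, h2k, hkt, hi, hik, Or.inl (sub_add_cancel a _).symm⟩

namespace Fin

variable {n : ℕ} {α : Type*}

lemma cons_nonneg_iff [Zero α] [LE α] {c : α} {r : Fin n → α} :
    0 ≤ (Fin.cons c r : Fin (n + 1) → α) ↔ 0 ≤ c ∧ 0 ≤ r := by
  simp [Pi.le_def, Fin.forall_fin_succ]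

lemma cons_sub_cons [Sub α] (c d : α) (r v : Fin n → α) :
    (Fin.cons c r - Fin.cons d v : Fin (n + 1) → α) = Fin.cons (c - d) (r - v) := by
  ext j
  refine Fin.cases ?_ (fun i => ?_) j <;> simp

end Fin

section SmallMass

variable {ι : Type*} [Fintype ι] [DecidableEq ι] {r : ι → ℤ}

lemma exists_single_le_of_sum_pos (hr : 0 ≤ r) (h : 0 < ∑ j, r j) :
    ∃ a, (Pi.single a 1 : ι → ℤ) ≤ r := by
  obtain ⟨a, -, ha⟩ :=
    exists_lt_of_sum_lt (f := fun _ => 0) (g := r) (s := univ) (by simpa using h)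
  refine ⟨a, fun j => ?_⟩
  rcases eq_or_ne j a with rfl | hj
  · simpa using Int.add_one_le_of_lt ha
  · simpa [hj] using hr j

lemma sum_sub_single (a : ι) : ∑ j, (r - (Pi.single a 1 : ι → ℤ)) j = ∑ j, r j - 1 := by
  simp [sum_sub_distrib]

lemma exists_single_add_single_le (hr : 0 ≤ r) (h : 2 ≤ ∑ j, r j) :
    ∃ a b, (Pi.single a 1 + Pi.single b 1 : ι → ℤ) ≤ r := by
  obtain ⟨a, ha⟩ := exists_single_le_of_sum_pos hr (by omega)
  obtain ⟨b, hb⟩ := exists_single_le_of_sum_pos (sub_nonneg.mpr ha)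
    (by rw [sum_sub_single]; omega)
  exact ⟨a, b, by simpa [add_comm] using le_sub_iff_add_le.mp hb⟩

lemma eq_zero_or_eq_single_of_sum_le_one (hr : 0 ≤ r) (h : ∑ j, r j ≤ 1) :
    r = 0 ∨ ∃ m, r = Pi.single m 1 := by
  have eq_zero {v : ι → ℤ} (hv : 0 ≤ v) (h0 : ∑ j, v j = 0) : v = 0 :=
    funext fun j => (sum_eq_zero_iff_of_nonneg fun j _ => hv j).mp h0 j (mem_univ j)
  rcases (sum_nonneg fun j _ => hr j).eq_or_lt with h0 | hpos
  · exact Or.inl (eq_zero hr h0.symm)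
  · obtain ⟨m, hm⟩ := exists_single_le_of_sum_pos hr hpos
    refine Or.inr ⟨m, sub_eq_zero.mp (eq_zero (sub_nonneg.mpr hm) ?_)⟩
    rw [sum_sub_single]
    omega

end SmallMass

section Fiber

variable {t N : ℕ}

lemma cons_mem_freqFiber_iff {c : ℤ} {r : Fin t → ℤ} :
    (Fin.cons c r : Fin (t + 1) → ℤ) ∈ freqFiber t N ↔
      0 ≤ c ∧ 0 ≤ r ∧ c + ∑ i, r i = N ∧ ∑ i : Fin t, ((i : ℕ) + 1 : ℤ) * r i = t := by
  simp [freqFiber, Fin.cons_nonneg_iff, Fin.sum_univ_succ, and_assoc]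

lemma sum_succ_mul_single (a : Fin t) :
    ∑ i : Fin t, ((i : ℕ) + 1 : ℤ) * (Pi.single a 1 : Fin t → ℤ) i = a + 1 := by
  simp [Pi.single_apply]

lemma freqMove_add_add_two (a b : Fin t) (h : (a : ℕ) + b + 1 < t) :
    freqMove t (a + b + 2) (a + 1) =
      Fin.cons (-1) (Pi.single a 1 + Pi.single b 1 - Pi.single ⟨a + b + 1, h⟩ 1) := by
  ext j
  refine Fin.cases ?_ (fun i => ?_) j <;>
    simp [freqMove, Pi.single_apply, Fin.ext_iff] <;> (try split_ifs) <;> omega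

lemma freqMoveStep_merge {c : ℤ} {r : Fin t → ℤ} {a b : Fin t} (hab : a ≤ b)
    (h : (a : ℕ) + b + 1 < t) (hc : 0 ≤ c) (hr : Pi.single a 1 + Pi.single b 1 ≤ r) :
    FreqMoveStep t (Fin.cons c r)
      (Fin.cons (c + 1) (r - (Pi.single a 1 + Pi.single b 1 - Pi.single ⟨a + b + 1, h⟩ 1))) := by
  have single_nonneg (m : Fin t) : (0 : Fin t → ℤ) ≤ Pi.single m 1 :=
    Pi.single_nonneg.mpr zero_le_one
  have hr' : 0 ≤ r - (Pi.single a 1 + Pi.single b 1 - Pi.single ⟨a + b + 1, h⟩ 1) := by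
    rw [sub_sub_eq_add_sub, add_sub_right_comm]
    exact add_nonneg (sub_nonneg.mpr hr) (single_nonneg _)
  refine ⟨?_, ?_, a + b + 2, a + 1, by omega, by omega, by omega, by omega, Or.inr ?_⟩
  · exact Fin.cons_nonneg_iff.mpr ⟨hc, hr.trans' (add_nonneg (single_nonneg a) (single_nonneg b))⟩
  · exact Fin.cons_nonneg_iff.mpr ⟨by omega, hr'⟩
  · rw [freqMove_add_add_two a b h, Fin.cons_sub_cons, sub_neg_eq_add]

theorem exists_reflTransGen_sum_le_one {c : ℤ} {r : Fin t → ℤ}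
    (h : (Fin.cons c r : Fin (t + 1) → ℤ) ∈ freqFiber t N) :
    ∃ c' r', ∑ i, r' i ≤ 1 ∧ (Fin.cons c' r' : Fin (t + 1) → ℤ) ∈ freqFiber t N ∧
      ReflTransGen (FreqMoveStep t) (Fin.cons c r) (Fin.cons c' r') := by
  obtain ⟨hc, hr, hsum, hweight⟩ := cons_mem_freqFiber_iff.mp h
  by_cases hsmall : ∑ i, r i ≤ 1
  · exact ⟨c, r, hsmall, h, .refl⟩
  obtain ⟨a, b, hle, hab⟩ :
      ∃ a b, a ≤ b ∧ (Pi.single a 1 + Pi.single b 1 : Fin t → ℤ) ≤ r := by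
    obtain ⟨a, b, hab⟩ := exists_single_add_single_le hr (by omega)
    rcases le_total a b with hle | hle
    · exact ⟨a, b, hle, hab⟩
    · exact ⟨b, a, hle, add_comm (Pi.single a 1 : Fin t → ℤ) _ ▸ hab⟩
  have hk : (a : ℕ) + b + 1 < t := by
    have := sum_le_sum fun i (_ : i ∈ univ) =>
      mul_le_mul_of_nonneg_left (hab i) (by positivity : (0 : ℤ) ≤ (i : ℕ) + 1)
    simp only [Pi.add_apply, mul_add, sum_add_distrib, sum_succ_mul_single] at this
    omega
  set v : Fin t → ℤ := Pi.single a 1 + Pi.single b 1 - Pi.single ⟨a + b + 1, hk⟩ 1 with hv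
  have hstep : FreqMoveStep t (Fin.cons c r) (Fin.cons (c + 1) (r - v)) :=
    freqMoveStep_merge hle hk hc hab
  have hsum_v : ∑ i, v i = 1 := by simp [hv, sum_add_distrib, sum_sub_distrib]
  have hweight_v : ∑ i : Fin t, ((i : ℕ) + 1 : ℤ) * v i = 0 := by
    simp only [hv, Pi.sub_apply, Pi.add_apply, mul_sub, mul_add, sum_sub_distrib,
      sum_add_distrib, sum_succ_mul_single]
    push_cast
    ring
  have hmem : (Fin.cons (c + 1) (r - v) : Fin (t + 1) → ℤ) ∈ freqFiber t N := by
    refine cons_mem_freqFiber_iff.mpr ⟨by omega, (Fin.cons_nonneg_iff.mp hstep.2.1).2, ?_, ?_⟩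
    · simp only [Pi.sub_apply, sum_sub_distrib, hsum_v]
      omega
    · simp only [Pi.sub_apply, mul_sub, sum_sub_distrib, hweight_v]
      omega
  obtain ⟨c', r', hsmall', hmem', hreach⟩ := exists_reflTransGen_sum_le_one hmem
  exact ⟨c', r', hsmall', hmem', .head hstep hreach⟩
termination_by (∑ i, r i).toNat
decreasing_by
  rw [← hv]
  simp only [Pi.sub_apply, sum_sub_distrib, hsum_v]
  omega

lemma cons_eq_cons_of_sum_le_one {c c' : ℤ} {r r' : Fin t → ℤ}
    (h : (Fin.cons c r : Fin (t + 1) → ℤ) ∈ freqFiber t N)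
    (h' : (Fin.cons c' r' : Fin (t + 1) → ℤ) ∈ freqFiber t N)
    (hr : ∑ i, r i ≤ 1) (hr' : ∑ i, r' i ≤ 1) :
    (Fin.cons c r : Fin (t + 1) → ℤ) = Fin.cons c' r' := by
  obtain ⟨-, hr0, hsum, hweight⟩ := cons_mem_freqFiber_iff.mp h
  obtain ⟨-, hr0', hsum', hweight'⟩ := cons_mem_freqFiber_iff.mp h'
  obtain rfl : r = r' := by
    rcases eq_zero_or_eq_single_of_sum_le_one hr0 hr with rfl | ⟨m, rfl⟩ <;>
      rcases eq_zero_or_eq_single_of_sum_le_one hr0' hr' with rfl | ⟨m', rfl⟩ <;>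
      simp only [sum_succ_mul_single, Pi.zero_apply, mul_zero, sum_const_zero] at hweight hweight'
    · rfl
    · omega
    · omega
    · rw [Fin.ext (by omega : (m : ℕ) = m')]
  rw [show c = c' by omega]

end Fiber

theorem stmt16_general (t N : ℕ) (f g : Fin (t + 1) → ℤ)
    (hf0 : ∀ j, 0 ≤ f j) (hg0 : ∀ j, 0 ≤ g j)
    (hfN : ∑ j, f j = N) (hgN : ∑ j, g j = N)
    (hft : ∑ j : Fin (t + 1), ((j : ℕ) : ℤ) * f j = t)
    (hgt : ∑ j : Fin (t + 1), ((j : ℕ) : ℤ) * g j = t) :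
    Relation.ReflTransGen
      (fun a b : Fin (t + 1) → ℤ => (∀ j, 0 ≤ a j) ∧ (∀ j, 0 ≤ b j) ∧
        ∃ k i, 2 ≤ k ∧ k ≤ t ∧ 1 ≤ i ∧ i ≤ k / 2 ∧
          (b = a + freqMove t k i ∨ b = a - freqMove t k i))
      f g := by
  change ReflTransGen (FreqMoveStep t) f g
  have hf : Fin.cons (f 0) (Fin.tail f) ∈ freqFiber t N := by
    rw [Fin.cons_self_tail]; exact ⟨hf0, hfN, hft⟩
  have hg : Fin.cons (g 0) (Fin.tail g) ∈ freqFiber t N := by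
    rw [Fin.cons_self_tail]; exact ⟨hg0, hgN, hgt⟩
  obtain ⟨c, r, hr, hmem, hfr⟩ := exists_reflTransGen_sum_le_one hf
  obtain ⟨c', r', hr', hmem', hgr⟩ := exists_reflTransGen_sum_le_one hg
  rw [Fin.cons_self_tail, cons_eq_cons_of_sum_le_one hmem hmem' hr hr'] at hfr
  rw [Fin.cons_self_tail] at hgr
  exact hfr.trans (Std.Symm.symm _ _ hgr)

theorem stmt16 (t N : ℕ) (ht : 1 ≤ t) (hN : t ≤ N) (f g : Fin (t + 1) → ℤ)
    (hf0 : ∀ j, 0 ≤ f j) (hg0 : ∀ j, 0 ≤ g j)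
    (hfN : ∑ j, f j = N) (hgN : ∑ j, g j = N)
    (hft : ∑ j : Fin (t + 1), ((j : ℕ) : ℤ) * f j = t)
    (hgt : ∑ j : Fin (t + 1), ((j : ℕ) : ℤ) * g j = t) :
    Relation.ReflTransGen
      (fun a b : Fin (t + 1) → ℤ => (∀ j, 0 ≤ a j) ∧ (∀ j, 0 ≤ b j) ∧
        ∃ k i, 2 ≤ k ∧ k ≤ t ∧ 1 ≤ i ∧ i ≤ k / 2 ∧
          (b = a + freqMove t k i ∨ b = a - freqMove t k i))
      f g :=
  stmt16_general t N f g hf0 hg0 hfN hgN hft hgt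
end
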